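/- Let s ≥ 1 be an integer, q = 2^s, m ≥ 2 an even integer, and n = q^m − 1. Then C_{(q,m;0)}^⊥ = C̃_{(q,m;1)} and C_{(q,m;1)}^⊥ = C̃_{(q,m;0)}. -/

import Mathlib

open Finset

/-- The `q`-weight of a nonnegative integer: the sum of its base-`q` digits. -/
def qWeight (q i : ℕ) : ℕ := (Nat.digits q i).sum

/-- The set `T_{(q,m;j)} = {i : 1 ≤ i ≤ q^m − 2, wt_q(i) ≡ j (mod 2)}`. -/
def Tset (q m j : ℕ) : Set ℕ :=
  {i | 1 ≤ i ∧ i ≤ q ^ m - 2 ∧ qWeight q i % 2 = j}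

/-- The cyclic code of length `n` over `F` with defining set `T` with respect to `β ∈ E`:
all words `(c_0, …, c_{n-1})` with `∑_j c_j β^{k j} = 0` for every `k ∈ T`. -/
def cyclicCode (F E : Type*) [Field F] [Field E] [Algebra F E]
    (n : ℕ) (β : E) (T : Set ℕ) : Submodule F (Fin n → F) where
  carrier := {c | ∀ k ∈ T, ∑ j : Fin n, algebraMap F E (c j) * β ^ (k * (j : ℕ)) = 0}
  add_mem' := by
    intro a b ha hb k hk
    simp only [Set.mem_setOf_eq, Pi.add_apply, map_add, add_mul] at *
    rw [Finset.sum_add_distrib, ha k hk, hb k hk, add_zero]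
  zero_mem' := by
    intro k hk
    simp
  smul_mem' := by
    intro r c hc k hk
    simp only [Set.mem_setOf_eq, Pi.smul_apply, smul_eq_mul, map_mul, mul_assoc] at *
    rw [← Finset.mul_sum, hc k hk, mul_zero]

/-- The minimum distance of a code: the least Hamming weight of a nonzero codeword. -/
noncomputable def minDist {F : Type*} [Field F] [DecidableEq F] {n : ℕ}
    (C : Submodule F (Fin n → F)) : ℕ :=
  sInf {w | ∃ c ∈ C, c ≠ 0 ∧ hammingNorm c = w}

/-- The dual of a set of words: all words orthogonal (for the standard bilinear form)
to every word of the set. -/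
def dualSet {F : Type*} [Field F] {N : ℕ} (C : Set (Fin N → F)) : Set (Fin N → F) :=
  {u | ∀ v ∈ C, ∑ k : Fin N, u k * v k = 0}

/-!
Let `û(k) = ∑_j u_j β^{kj}`. A cyclic code with defining set `S`, a union of `q`-cyclotomic cosets
mod `n`, has as dual the cyclic code with defining set `-(ℤ/n \ S)`. One inclusion is the
orthogonality relation `∑_k û(-k) v̂(k) = n ⟨u, v⟩`. For the other, the words `j ↦ Tr(γ β^{kj})`
with `-k ∉ S` lie in the code, so a word `u` orthogonal to the code has `Tr(γ û(k)) = 0` for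
all `γ`, and nondegeneracy of the trace form gives `û(k) = 0`.

For `n = q^m - 1`, multiplication by `q` rotates the `m` base-`q` digits and negation replaces
each digit `d` by `q - 1 - d`, so `wt_q(-x) = m(q - 1) - wt_q(x)`. For even `m` both maps preserve
the parity of the weight, hence the complement of `T_{(q,m;i)}` is `T_{(q,m;1-i)} ∪ {0}`, which is
its own negative.
-/

section qWeight

variable {q : ℕ}

lemma qWeight_add_mul (hq : 1 < q) {d : ℕ} (hd : d < q) (x : ℕ) :
    qWeight q (d + q * x) = d + qWeight q x := by
  by_cases h : d = 0 ∧ x = 0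
  · obtain ⟨rfl, rfl⟩ := h
    simp [qWeight]
  · rw [qWeight, Nat.digits_add q hq d x hd (by tauto), List.sum_cons, qWeight]

lemma qWeight_of_lt (hq : 1 < q) {d : ℕ} (hd : d < q) : qWeight q d = d := by
  simpa [qWeight] using qWeight_add_mul hq hd 0

lemma qWeight_eq_mod_add_qWeight_div (hq : 1 < q) (x : ℕ) :
    qWeight q x = x % q + qWeight q (x / q) := by
  rw [← qWeight_add_mul hq (Nat.mod_lt x (by omega)), Nat.mod_add_div]

lemma qWeight_add_pow_mul (hq : 1 < q) {t r : ℕ} (hr : r < q ^ t) (c : ℕ) :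
    qWeight q (r + q ^ t * c) = qWeight q r + qWeight q c := by
  induction t generalizing r with
  | zero =>
    obtain rfl : r = 0 := by simpa using hr
    simp [qWeight]
  | succ t ih =>
    have hr' : r / q < q ^ t := by
      rwa [Nat.div_lt_iff_lt_mul (by omega), ← pow_succ]
    have hsplit : r + q ^ (t + 1) * c = r % q + q * (r / q + q ^ t * c) := by
      conv_lhs => rw [← Nat.mod_add_div r q]
      ring
    rw [hsplit, qWeight_add_mul hq (Nat.mod_lt r (by omega)), ih hr',
      qWeight_eq_mod_add_qWeight_div hq r, add_assoc]

lemma qWeight_add_qWeight_of_add_add_one_eq_pow (hq : 1 < q) {m x y : ℕ}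
    (h : x + y + 1 = q ^ m) : qWeight q x + qWeight q y = m * (q - 1) := by
  induction m generalizing x y with
  | zero =>
    obtain ⟨rfl, rfl⟩ : x = 0 ∧ y = 0 := by simp at h; omega
    simp [qWeight]
  | succ m ih =>
    have hx := Nat.mod_add_div x q
    have hy := Nat.mod_add_div y q
    have hxq := Nat.mod_lt x (show 0 < q by omega)
    have hyq := Nat.mod_lt y (show 0 < q by omega)
    have hsum : (x % q + y % q + 1) + q * (x / q + y / q) = q * q ^ m := by
      rw [← pow_succ', ← h]
      conv_rhs => rw [← hx, ← hy]
      ring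
    have hlow : x % q + y % q + 1 = q :=
      Nat.eq_of_dvd_of_lt_two_mul (by omega)
        ((Nat.dvd_add_left (dvd_mul_right q _)).mp (hsum ▸ dvd_mul_right q _)) (by omega)
    have hhigh : x / q + y / q + 1 = q ^ m :=
      Nat.eq_of_mul_eq_mul_left (show 0 < q by omega) (by rw [mul_add, mul_one]; omega)
    rw [qWeight_eq_mod_add_qWeight_div hq x, qWeight_eq_mod_add_qWeight_div hq y, add_mul,
      one_mul, ← ih hhigh]
    omega

lemma qWeight_mul_mod (hq : 1 < q) {m x : ℕ} (hx : x < q ^ m - 1) :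
    qWeight q (q * x % (q ^ m - 1)) = qWeight q x := by
  obtain ⟨t, rfl⟩ : ∃ t, m = t + 1 := ⟨m - 1, by cases m <;> simp_all⟩
  set P := q ^ t with hP
  set N := q ^ (t + 1) - 1 with hN
  have hP0 : 0 < P := by positivity
  have hNP : N + 1 = q * P := by rw [hN, hP, ← pow_succ']; have := hP0; omega
  have hc : x / P < q := by rw [Nat.div_lt_iff_lt_mul hP0]; nlinarith
  have hr : x % P < P := Nat.mod_lt x hP0
  have hx' := Nat.mod_add_div x P
  have hlt : x / P + q * (x % P) < N := by nlinarith
  have hqx : q * x = (x / P + q * (x % P)) + N * (x / P) := by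
    calc q * x = q * (x % P + P * (x / P)) := by rw [hx']
      _ = q * (x % P) + (N + 1) * (x / P) := by rw [hNP]; ring
      _ = _ := by ring
  rw [hqx, Nat.add_mul_mod_self_left, Nat.mod_eq_of_lt hlt, qWeight_add_mul hq hc]
  conv_rhs => rw [← hx', qWeight_add_pow_mul hq hr, qWeight_of_lt hq hc]
  rw [add_comm]

lemma qWeight_mul_pow_mod (hq : 1 < q) {m x : ℕ} (hx : x < q ^ m - 1) (i : ℕ) :
    qWeight q (x * q ^ i % (q ^ m - 1)) = qWeight q x := by
  induction i with
  | zero => rw [pow_zero, mul_one, Nat.mod_eq_of_lt hx]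
  | succ i ih =>
    have hlt := Nat.mod_lt (x * q ^ i) (show 0 < q ^ m - 1 by omega)
    rw [pow_succ', mul_left_comm, ← Nat.mul_mod_mod, qWeight_mul_mod hq hlt, ih]

lemma qWeight_mod_two_eq_of_dvd (hq : 1 < q) {m : ℕ} (hm : Even m) {x y i : ℕ}
    (hx : x < q ^ m - 1) (hy0 : 0 < y) (hy : y < q ^ m - 1)
    (hdvd : q ^ m - 1 ∣ x * q ^ i + y) : qWeight q x % 2 = qWeight q y % 2 := by
  have hr := Nat.mod_lt (x * q ^ i) (show 0 < q ^ m - 1 by omega)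
  have hsum : x * q ^ i % (q ^ m - 1) + y = q ^ m - 1 := by
    refine Nat.eq_of_dvd_of_lt_two_mul (by omega) ?_ (by omega)
    rwa [Nat.dvd_iff_mod_eq_zero, Nat.mod_add_mod, ← Nat.dvd_iff_mod_eq_zero]
  have hweight := qWeight_add_qWeight_of_add_add_one_eq_pow hq
    (show x * q ^ i % (q ^ m - 1) + y + 1 = q ^ m by omega)
  rw [qWeight_mul_pow_mod hq hx] at hweight
  have heven : Even (m * (q - 1)) := hm.mul_right _
  rw [← hweight, Nat.even_add, Nat.even_iff, Nat.even_iff] at heven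
  omega

end qWeight

section Tset

variable {q m a b : ℕ}

lemma exists_mem_Tset_add_dvd (hq : 1 < q) (hm : Even m) (hab : a + b = 1) {k : ℕ}
    (hk : k < q ^ m - 1) (hka : k ∉ Tset q m a) :
    ∃ k' ∈ Tset q m b ∪ {0}, q ^ m - 1 ∣ k + k' := by
  rcases Nat.eq_zero_or_pos k with rfl | hk0
  · exact ⟨0, Or.inr rfl, dvd_zero _⟩
  · have hparity := qWeight_mod_two_eq_of_dvd hq hm hk (y := q ^ m - 1 - k) (i := 0)
      (by omega) (by omega) (by rw [pow_zero, mul_one, Nat.add_sub_cancel' hk.le])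
    have hka' : ¬ (1 ≤ k ∧ k ≤ q ^ m - 2 ∧ qWeight q k % 2 = a) := hka
    refine ⟨q ^ m - 1 - k, Or.inl ⟨by omega, by omega, by omega⟩, ?_⟩
    rw [Nat.add_sub_cancel' hk.le]

lemma not_dvd_mul_pow_add_of_mem_Tset (hq : 1 < q) (hm : Even m) (hab : a ≠ b) {k t : ℕ}
    (hk : k ∈ Tset q m b ∪ {0}) (ht : t ∈ Tset q m a) (i : ℕ) :
    ¬ q ^ m - 1 ∣ k * q ^ i + t := by
  obtain ⟨ht1, ht2, hta⟩ := ht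
  intro hdvd
  rcases hk with ⟨hk1, hk2, hkb⟩ | rfl
  · have hparity := qWeight_mod_two_eq_of_dvd hq hm (by omega) ht1 (by omega) hdvd
    exact hab (by omega)
  · rw [zero_mul, zero_add] at hdvd
    have := Nat.le_of_dvd ht1 hdvd
    omega

end Tset

section DFT

variable {E : Type*} [Field E] {n : ℕ} {β : E}

def dft (β : E) (c : Fin n → E) (k : ℕ) : E := ∑ j : Fin n, c j * β ^ (k * j)

lemma sum_pow_eq_zero_of_pow_eq_one {x : E} (hxn : x ^ n = 1) (hx : x ≠ 1) :
    ∑ j : Fin n, x ^ (j : ℕ) = 0 := by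
  rw [Fin.sum_univ_eq_sum_range (x ^ ·) n, geom_sum_eq hx, hxn, sub_self, zero_div]

lemma IsPrimitiveRoot.sum_pow_pow_eq_zero (hβ : IsPrimitiveRoot β n) {a : ℕ} (ha : ¬ n ∣ a) :
    ∑ j : Fin n, (β ^ a) ^ (j : ℕ) = 0 :=
  sum_pow_eq_zero_of_pow_eq_one (x := β ^ a)
    (by rw [← pow_mul, mul_comm, pow_mul, hβ.pow_eq_one, one_pow])
    (mt (hβ.pow_eq_one_iff_dvd a).1 ha)

lemma IsPrimitiveRoot.dft_inv (hβ : IsPrimitiveRoot β n) (c : Fin n → E) {k k' : ℕ}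
    (h : n ∣ k + k') : dft β⁻¹ c k = dft β c k' := by
  have hmul : β ^ k * β ^ k' = 1 := by rw [← pow_add, hβ.pow_eq_one_iff_dvd]; exact h
  have hinv : β⁻¹ ^ k = β ^ k' := by rw [inv_pow, ← eq_inv_of_mul_eq_one_right hmul]
  refine sum_congr rfl fun j _ => ?_
  rw [pow_mul, hinv, ← pow_mul]

lemma IsPrimitiveRoot.sum_dft_inv_mul_dft (hβ : IsPrimitiveRoot β n) (u v : Fin n → E) :
    ∑ k : Fin n, dft β⁻¹ u k * dft β v k = n * ∑ j, u j * v j := by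
  have horth : ∀ j j' : Fin n,
      ∑ k : Fin n, (β⁻¹ ^ (j : ℕ) * β ^ (j' : ℕ)) ^ (k : ℕ) =
        if j = j' then (n : E) else 0 := by
    intro j j'
    have hβ0 : β ≠ 0 := hβ.ne_zero (by have := j.isLt; omega)
    split_ifs with h
    · subst h
      simp [hβ0]
    · refine sum_pow_eq_zero_of_pow_eq_one ?_ ?_
      · rw [mul_pow, ← pow_mul, ← pow_mul, mul_comm _ n, mul_comm _ n, pow_mul, pow_mul, inv_pow,
          hβ.pow_eq_one]
        simp
      · rw [Ne, inv_pow, inv_mul_eq_one₀ (pow_ne_zero _ hβ0)]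
        exact fun hpow => h (Fin.ext (hβ.pow_inj j.isLt j'.isLt hpow))
  calc ∑ k : Fin n, dft β⁻¹ u k * dft β v k
      = ∑ k : Fin n, ∑ j, ∑ j',
          u j * v j' * (β⁻¹ ^ (j : ℕ) * β ^ (j' : ℕ)) ^ (k : ℕ) := by
        simp only [dft, sum_mul_sum]
        refine sum_congr rfl fun k _ => sum_congr rfl fun j _ => sum_congr rfl fun j' _ => ?_
        rw [mul_pow, ← pow_mul, ← pow_mul]
        ring
    _ = ∑ j, ∑ j',
          u j * v j' * ∑ k : Fin n, (β⁻¹ ^ (j : ℕ) * β ^ (j' : ℕ)) ^ (k : ℕ) := by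
        simp only [mul_sum]
        rw [sum_comm]
        exact sum_congr rfl fun j _ => sum_comm
    _ = ∑ j, u j * v j * n := by
        simp only [horth, mul_ite, mul_zero, sum_ite_eq, mem_univ, if_true]
    _ = n * ∑ j, u j * v j := by
        rw [mul_sum]
        exact sum_congr rfl fun j _ => mul_comm _ _

end DFT

section CyclicCode

variable {F E : Type*} [Field F] [Field E] [Algebra F E] {n : ℕ} {β : E}

lemma mem_cyclicCode_iff {T : Set ℕ} {c : Fin n → F} :
    c ∈ cyclicCode F E n β T ↔ ∀ k ∈ T, dft β (fun j => algebraMap F E (c j)) k = 0 :=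
  Iff.rfl

theorem cyclicCode_subset_dualSet (hβ : IsPrimitiveRoot β n) {S T : Set ℕ}
    (hcover : ∀ k < n, k ∉ S → ∃ k' ∈ T, n ∣ k + k') :
    (cyclicCode F E n β T : Set (Fin n → F)) ⊆ dualSet (cyclicCode F E n β S) := by
  intro u hu v hv
  rcases Nat.eq_zero_or_pos n with rfl | hn
  · simp
  have : NeZero n := ⟨hn.ne'⟩
  apply FaithfulSMul.algebraMap_injective F E
  rw [map_zero, map_sum]
  refine (mul_eq_zero.mp ?_).resolve_left hβ.neZero'.out
  simp only [map_mul]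
  rw [← hβ.sum_dft_inv_mul_dft]
  refine sum_eq_zero fun k _ => ?_
  by_cases hk : (k : ℕ) ∈ S
  · rw [mem_cyclicCode_iff.mp hv k hk, mul_zero]
  · obtain ⟨k', hk', hdvd⟩ := hcover k k.isLt hk
    rw [hβ.dft_inv _ hdvd, mem_cyclicCode_iff.mp hu k' hk', zero_mul]

theorem dualSet_subset_cyclicCode [Finite E] (hβ : IsPrimitiveRoot β n) {S T : Set ℕ}
    (hsep : ∀ k ∈ T, ∀ t ∈ S, ∀ i, ¬ n ∣ k * Nat.card F ^ i + t) :
    dualSet (cyclicCode F E n β S : Set (Fin n → F)) ⊆ cyclicCode F E n β T := by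
  intro u hu k hk
  refine (traceForm_nondegenerate F E).1 _ fun γ => ?_
  set v : Fin n → F := fun j => Algebra.trace F E (γ * β ^ (k * j))
  have hv : v ∈ cyclicCode F E n β S := by
    intro t ht
    calc ∑ j : Fin n, algebraMap F E (v j) * β ^ (t * j)
        = ∑ i ∈ range (Module.finrank F E), γ ^ (Nat.card F ^ i) *
            ∑ j : Fin n, (β ^ (k * Nat.card F ^ i + t)) ^ (j : ℕ) := by
          simp only [v, FiniteField.algebraMap_trace_eq_sum_pow, sum_mul, mul_sum]
          rw [sum_comm]
          refine sum_congr rfl fun i _ => sum_congr rfl fun j _ => ?_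
          rw [mul_pow, ← pow_mul, ← pow_mul, mul_assoc, ← pow_add]
          congr 2
          ring
      _ = 0 := sum_eq_zero fun i _ => by
          rw [hβ.sum_pow_pow_eq_zero (hsep k hk t ht i), mul_zero]
  calc Algebra.traceForm F E (∑ j : Fin n, algebraMap F E (u j) * β ^ (k * j)) γ
      = ∑ j, u j * v j := by
        rw [Algebra.traceForm_apply, sum_mul, map_sum]
        refine sum_congr rfl fun j _ => ?_
        rw [mul_assoc, ← Algebra.smul_def, map_smul, smul_eq_mul, mul_comm _ γ]
    _ = 0 := hu v hv

theorem dualSet_cyclicCode_eq [Finite E] (hβ : IsPrimitiveRoot β n) {S T : Set ℕ}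
    (hcover : ∀ k < n, k ∉ S → ∃ k' ∈ T, n ∣ k + k')
    (hsep : ∀ k ∈ T, ∀ t ∈ S, ∀ i, ¬ n ∣ k * Nat.card F ^ i + t) :
    dualSet (cyclicCode F E n β S : Set (Fin n → F)) = cyclicCode F E n β T :=
  (dualSet_subset_cyclicCode hβ hsep).antisymm (cyclicCode_subset_dualSet hβ hcover)

theorem dualSet_cyclicCode_Tset [Finite E] {q m a b : ℕ} (hm : Even m) (hF : Nat.card F = q)
    (hβ : IsPrimitiveRoot β (q ^ m - 1)) (hab : a + b = 1) :
    dualSet (cyclicCode F E (q ^ m - 1) β (Tset q m a) : Set (Fin (q ^ m - 1) → F)) =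
      cyclicCode F E (q ^ m - 1) β (Tset q m b ∪ {0}) := by
  have : Finite F := .of_injective _ (FaithfulSMul.algebraMap_injective F E)
  have hq : 1 < q := hF ▸ Finite.one_lt_card
  refine dualSet_cyclicCode_eq hβ (fun k hk hka => exists_mem_Tset_add_dvd hq hm hab hk hka) ?_
  intro k hk t ht i
  rw [hF]
  exact not_dvd_mul_pow_add_of_mem_Tset hq hm (by omega) hk ht i

end CyclicCode

theorem stmt17_general (q m n : ℕ) (hmeven : Even m) (hn : n = q ^ m - 1)
    (F E : Type*) [Field F] [Fintype F] [Field E] [Fintype E] [Algebra F E]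
    (hF : Fintype.card F = q)
    (β : E) (hβ : orderOf β = n) :
    dualSet (cyclicCode F E n β (Tset q m 0) : Set (Fin n → F)) =
        (cyclicCode F E n β (Tset q m 1 ∪ {0}) : Set (Fin n → F)) ∧
      dualSet (cyclicCode F E n β (Tset q m 1) : Set (Fin n → F)) =
        (cyclicCode F E n β (Tset q m 0 ∪ {0}) : Set (Fin n → F)) := by
  subst hn
  have hβ' : IsPrimitiveRoot β (q ^ m - 1) := hβ ▸ IsPrimitiveRoot.orderOf β
  rw [← Nat.card_eq_fintype_card] at hF
  exact ⟨dualSet_cyclicCode_Tset hmeven hF hβ' rfl, dualSet_cyclicCode_Tset hmeven hF hβ' rfl⟩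

theorem stmt17 (s q m n : ℕ) (hs : 1 ≤ s) (hq : q = 2 ^ s)
    (hm : 2 ≤ m) (hmeven : Even m) (hn : n = q ^ m - 1)
    (F E : Type*) [Field F] [Fintype F] [DecidableEq F] [Field E] [Fintype E] [Algebra F E]
    (hF : Fintype.card F = q) (hE : Fintype.card E = q ^ m)
    (β : E) (hβ : orderOf β = n) :
    dualSet (cyclicCode F E n β (Tset q m 0) : Set (Fin n → F)) =
        (cyclicCode F E n β (Tset q m 1 ∪ {0}) : Set (Fin n → F)) ∧
      dualSet (cyclicCode F E n β (Tset q m 1) : Set (Fin n → F)) =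
        (cyclicCode F E n β (Tset q m 0 ∪ {0}) : Set (Fin n → F)) :=
  stmt17_general q m n hmeven hn F E hF β hβ
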